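/- Let G be a (3/2)-tough graph on at least three vertices with no 2-factor, and let (A,B) be a biased barrier of G. Then there exists a vertex u ∈ B such that u has a neighbor in at least two distinct components H of G − (A ∪ B) with e(H,B) odd and e(H,B) ≥ 3. -/

import Mathlib

open SimpleGraph

variable {V : Type*}

/-- The number of (ordered) pairs giving edges between `X` and `Y`;
for disjoint `X`, `Y` this is the number of edges between `X` and `Y`. -/
noncomputable def eB (G : SimpleGraph V) (X Y : Set V) : ℕ :=
  Set.ncard {p : V × V | p.1 ∈ X ∧ p.2 ∈ Y ∧ G.Adj p.1 p.2}

/-- The vertex set (in `V`) of a connected component of the induced subgraph on `U`. -/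
def compSupp (G : SimpleGraph V) (U : Set V)
    (C : (G.induce U).ConnectedComponent) : Set V :=
  Subtype.val '' C.supp

/-- `δ(A,B) = 2|A| - 2|B| + ∑_{v ∈ B} d_{G-A}(v) - o(A,B)`, where `o(A,B)` is the
number of components of `G - (A ∪ B)` sending an odd number of edges to `B`. -/
noncomputable def deltaAB (G : SimpleGraph V) (A B : Set V) : ℤ :=
  2 * A.ncard - 2 * B.ncard + eB G B Aᶜ -
    Nat.card {C : (G.induce (A ∪ B)ᶜ).ConnectedComponent //
      Odd (eB G (compSupp G (A ∪ B)ᶜ C) B)}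

/-- A barrier (Tutte pair) of `G`. -/
def IsBarrier (G : SimpleGraph V) (A B : Set V) : Prop :=
  Disjoint A B ∧ deltaAB G A B ≤ -2

/-- A biased barrier: a barrier maximizing `|A|` and, subject to that, minimizing `|B|`. -/
def IsBiasedBarrier (G : SimpleGraph V) (A B : Set V) : Prop :=
  IsBarrier G A B ∧
    ∀ A' B' : Set V, IsBarrier G A' B' →
      A'.ncard ≤ A.ncard ∧ (A'.ncard = A.ncard → B.ncard ≤ B'.ncard)

/-- A `2`-factor is a `2`-regular spanning subgraph. -/
def HasTwoFactor (G : SimpleGraph V) : Prop :=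
  ∃ H : SimpleGraph V, H ≤ G ∧ ∀ v : V, (H.neighborSet v).ncard = 2

/-- The number of components of `G - S`. -/
noncomputable def numComp (G : SimpleGraph V) (S : Set V) : ℕ :=
  Nat.card ((G.induce Sᶜ).ConnectedComponent)

/-- `G` is `t`-tough: every vertex cut `S` satisfies `|S| ≥ t · c(G - S)`. -/
def Tough (t : ℝ) (G : SimpleGraph V) : Prop :=
  ∀ S : Set V, 2 ≤ numComp G S → t * (numComp G S : ℝ) ≤ (S.ncard : ℝ)

/-- The toughness `τ(G) = min_S |S| / c(G - S)` over vertex cuts `S`. -/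
noncomputable def toughness (G : SimpleGraph V) : ℝ :=
  sInf {r : ℝ | ∃ S : Set V, 2 ≤ numComp G S ∧ r = (S.ncard : ℝ) / (numComp G S : ℝ)}

/-- `G` is `k`-connected. -/
def KConnected (k : ℕ) (G : SimpleGraph V) : Prop :=
  k < Nat.card V ∧ ∀ S : Set V, S.ncard < k → (G.induce Sᶜ).Connected

/-- The independence number `α(G)`. -/
noncomputable def indepNum (G : SimpleGraph V) : ℕ :=
  sSup {n : ℕ | ∃ s : Set V, (∀ u ∈ s, ∀ v ∈ s, ¬ G.Adj u v) ∧ s.ncard = n}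

/-- The minimum degree `δ(G)`. -/
noncomputable def minDeg (G : SimpleGraph V) : ℕ :=
  sInf {d : ℕ | ∃ v : V, (G.neighborSet v).ncard = d}

/-- `H` occurs as an induced subgraph of `G`. -/
def IsInducedCopy {W : Type*} (H : SimpleGraph W) (G : SimpleGraph V) : Prop :=
  ∃ f : W ↪ V, ∀ a b : W, G.Adj (f a) (f b) ↔ H.Adj a b

/-- The disjoint union `P_m ∪ k·P_1` of a path on `m` vertices and `k` isolated vertices. -/
def pathUnion (m k : ℕ) : SimpleGraph (Fin m ⊕ Fin k) where
  Adj a b := ∃ i j : Fin m, a = Sum.inl i ∧ b = Sum.inl j ∧ (pathGraph m).Adj i j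
  symm := ⟨by rintro a b ⟨i, j, rfl, rfl, h⟩; exact ⟨j, i, rfl, rfl, h.symm⟩⟩
  loopless := ⟨by
    rintro a ⟨i, j, rfl, hj, h⟩
    obtain rfl := Sum.inl.inj hj
    exact (pathGraph m).loopless.irrefl i h⟩

/-- The join `G ∨ H` of two graphs. -/
def joinG {α β : Type*} (G : SimpleGraph α) (H : SimpleGraph β) :
    SimpleGraph (α ⊕ β) where
  Adj x y :=
    match x, y with
    | Sum.inl a, Sum.inl b => G.Adj a b
    | Sum.inr a, Sum.inr b => H.Adj a b
    | _, _ => True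
  symm := ⟨by rintro (a | a) (b | b) h <;> simp_all <;> exact h.symm⟩
  loopless := ⟨by rintro (a | a) h <;> simp_all⟩

/-- `a` disjoint copies of the complete graph `K_b`. -/
def cliquesG (a b : ℕ) : SimpleGraph (Fin a × Fin b) where
  Adj p q := p.1 = q.1 ∧ p.2 ≠ q.2
  symm := ⟨by rintro p q ⟨h1, h2⟩; exact ⟨h1.symm, h2.symm⟩⟩
  loopless := ⟨by rintro p ⟨_, h⟩; exact h rfl⟩

/-- The graph `H_n`: `K_n ∨ (K̄_{2n+1} ∪ K_{2n+1})` together with a perfect matching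
between the independent part and the clique part. -/
def Hgraph (n : ℕ) :
    SimpleGraph (Fin n ⊕ (Fin (2 * n + 1) ⊕ Fin (2 * n + 1))) where
  Adj x y := x ≠ y ∧
    match x, y with
    | Sum.inl _, _ => True
    | _, Sum.inl _ => True
    | Sum.inr (Sum.inl _), Sum.inr (Sum.inl _) => False
    | Sum.inr (Sum.inr _), Sum.inr (Sum.inr _) => True
    | Sum.inr (Sum.inl i), Sum.inr (Sum.inr j) => i = j
    | Sum.inr (Sum.inr i), Sum.inr (Sum.inl j) => i = j
  symm := ⟨by
    rintro (a | a | a) (b | b | b) ⟨hne, h⟩ <;>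
      exact ⟨Ne.symm hne, by simp_all⟩⟩
  loopless := ⟨by rintro x ⟨hne, _⟩; exact hne rfl⟩

/-!
Let `U = V − (A ∪ B)`. Since `(A, B)` is biased, neither `(A, B − u)` for `u ∈ B` nor
`(A + w, B)` for `w ∈ U` is a barrier. A vertex moved into `U` merges with the components of
`G[U]` it sees, so comparing `δ` before and after the move shows: `B` is independent, each
`u ∈ B` sends at most one edge to each component `H` of `G[U]` and only to components with
`e(H, B)` odd, and a vertex of such a component has at most one neighbour in `B`.

If every `u ∈ B` saw at most one big odd component (`e(H, B) ≥ 3`), these `d` components would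
receive `E ≤ |B|` edges from `B`, while `δ(A, B) ≤ −2` gives `2|A| + E + 2 ≤ 2|B| + d`. For
`|B| ≥ 2`, delete `A` and all but one `B`-neighbour of each big odd component: the vertices of
`B` fall into distinct components, and `3/2`-toughness gives `3|B| ≤ 2(|A| + E − d)`, which is
absurd. For `|B| = 1` the inequality forces `A = ∅`; then `δ ≤ −2` bounds the degree of the
vertex of `B` by `c(G − B) ≤ 1`, impossible in a `3/2`-tough graph on at least three vertices.
-/

section Edges

variable (G : SimpleGraph V)

lemma eB_comm (X Y : Set V) : eB G X Y = eB G Y X := by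
  unfold eB
  rw [← Set.ncard_image_of_injective _ Prod.swap_injective, Set.image_swap_eq_preimage_swap]
  congr 1
  ext ⟨a, b⟩
  simp only [Set.mem_preimage, Prod.swap_prod_mk, Set.mem_ofPred_eq, G.adj_comm b a]
  tauto

lemma eB_singleton_left (x : V) (Y : Set V) : eB G {x} Y = (G.neighborSet x ∩ Y).ncard := by
  unfold eB
  rw [← Set.ncard_image_of_injective (G.neighborSet x ∩ Y) (Prod.mk_right_injective x)]
  congr 1
  ext ⟨a, b⟩
  simp only [Set.mem_ofPred_eq, Set.mem_singleton_iff, Set.mem_image, Set.mem_inter_iff,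
    mem_neighborSet, Prod.mk.injEq]
  constructor
  · rintro ⟨rfl, hb, hab⟩
    exact ⟨b, ⟨hab, hb⟩, rfl, rfl⟩
  · rintro ⟨c, ⟨hac, hc⟩, rfl, rfl⟩
    exact ⟨rfl, hc, hac⟩

variable [Finite V]

lemma eB_eq_zero {X Y : Set V} (h : ∀ x ∈ X, ∀ y ∈ Y, ¬ G.Adj x y) : eB G X Y = 0 := by
  unfold eB
  rw [Set.ncard_eq_zero, Set.eq_empty_iff_forall_notMem]
  rintro ⟨x, y⟩ ⟨hx, hy, hxy⟩
  exact h x hx y hy hxy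

lemma eB_mono_right {X Y Y' : Set V} (h : Y ⊆ Y') : eB G X Y ≤ eB G X Y' :=
  Set.ncard_le_ncard (fun _ hp => ⟨hp.1, h hp.2.1, hp.2.2⟩) (Set.toFinite _)

lemma one_le_eB {X Y : Set V} {x y : V} (hx : x ∈ X) (hy : y ∈ Y) (hxy : G.Adj x y) :
    1 ≤ eB G X Y :=
  (Set.ncard_pos (Set.toFinite _)).mpr ⟨(x, y), hx, hy, hxy⟩

lemma eq_of_eB_le_one {X Y : Set V} (h : eB G X Y ≤ 1) {x x' y y' : V}
    (hx : x ∈ X) (hy : y ∈ Y) (hxy : G.Adj x y)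
    (hx' : x' ∈ X) (hy' : y' ∈ Y) (hxy' : G.Adj x' y') : x = x' ∧ y = y' :=
  Prod.ext_iff.mp <|
    (Set.ncard_le_one (Set.toFinite _)).mp h (x, y) ⟨hx, hy, hxy⟩ (x', y') ⟨hx', hy', hxy'⟩

lemma eB_union_right {X Y Z : Set V} (h : Disjoint Y Z) :
    eB G X (Y ∪ Z) = eB G X Y + eB G X Z := by
  unfold eB
  rw [← Set.ncard_union_eq _ (Set.toFinite _) (Set.toFinite _)]
  · congr 1
    ext p
    simp only [Set.mem_ofPred_eq, Set.mem_union]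
    tauto
  · exact Set.disjoint_left.mpr fun p hY hZ => h.ne_of_mem hY.2.1 hZ.2.1 rfl

lemma eB_union_left {X Y Z : Set V} (h : Disjoint X Y) :
    eB G (X ∪ Y) Z = eB G X Z + eB G Y Z := by
  rw [eB_comm, eB_union_right G h, eB_comm G Z X, eB_comm G Z Y]

lemma eB_biUnion_left {ι : Type*} (s : Finset ι) {f : ι → Set V}
    (hf : Set.PairwiseDisjoint ↑s f) (Y : Set V) :
    eB G (⋃ i ∈ s, f i) Y = ∑ i ∈ s, eB G (f i) Y := by
  classical
  induction s using Finset.induction_on with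
  | empty => simp [eB_eq_zero]
  | insert a s has ih =>
    rw [Finset.coe_insert, Set.pairwiseDisjoint_insert_of_notMem (by exact_mod_cast has)] at hf
    rw [Finset.set_biUnion_insert, eB_union_left G, ih hf.1, Finset.sum_insert has]
    exact Set.disjoint_iUnion₂_right.mpr hf.2

lemma eB_biUnion_right {ι : Type*} (s : Finset ι) {f : ι → Set V}
    (hf : Set.PairwiseDisjoint ↑s f) (X : Set V) :
    eB G X (⋃ i ∈ s, f i) = ∑ i ∈ s, eB G X (f i) := by
  rw [eB_comm, eB_biUnion_left G s hf]
  simp only [eB_comm G X]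

lemma eB_singleton_self (x : V) : eB G {x} {x} = 0 :=
  eB_eq_zero G fun _ ha _ hb hab => hab.ne ((Set.mem_singleton_iff.mp ha).trans hb.symm)

lemma eB_eq_eB_sdiff_singleton_add {X Y : Set V} {y : V} (hy : y ∈ Y) :
    eB G X Y = eB G X (Y \ {y}) + eB G X {y} := by
  conv_lhs => rw [← Set.sdiff_union_of_subset (Set.singleton_subset_iff.mpr hy)]
  exact eB_union_right G Set.disjoint_sdiff_left

def attachment (X Y : Set V) : Set V := {x ∈ X | ∃ y ∈ Y, G.Adj x y}

lemma ncard_attachment_le_eB (X Y : Set V) :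
    (attachment G X Y).ncard ≤ eB G X Y := by
  have : attachment G X Y =
      Prod.fst '' {p : V × V | p.1 ∈ X ∧ p.2 ∈ Y ∧ G.Adj p.1 p.2} := by
    ext x
    simp only [attachment, Set.mem_image, Prod.exists, exists_and_right, exists_eq_right,
      Set.mem_ofPred_eq]
    exact ⟨fun ⟨hx, y, hy, hxy⟩ => ⟨y, hx, hy, hxy⟩,
      fun ⟨y, hx, hy, hxy⟩ => ⟨hx, y, hy, hxy⟩⟩
  rw [this]
  exact Set.ncard_image_le (Set.toFinite _)

lemma ncard_biUnion_attachment_add_card_le {ι : Type*} (s : Finset ι)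
    (X : ι → Set V) (Y : Set V) (p : ι → V) (hp : ∀ i ∈ s, p i ∈ attachment G (X i) Y) :
    (⋃ i ∈ s, attachment G (X i) Y \ {p i}).ncard + s.card ≤ ∑ i ∈ s, eB G (X i) Y := by
  refine (Nat.add_le_add_right (Finset.set_ncard_biUnion_le s _) _).trans ?_
  rw [Finset.card_eq_sum_ones, ← Finset.sum_add_distrib]
  refine Finset.sum_le_sum fun i hi => ?_
  rw [Set.ncard_sdiff_singleton_add_one (hp i hi)]
  exact ncard_attachment_le_eB G _ _

end Edges

lemma SimpleGraph.Walk.mem_of_adj_closed {W : Type*} {H : SimpleGraph W} {X : Set W}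
    (hX : ∀ a ∈ X, ∀ b, H.Adj a b → b ∈ X) {a b : W} (p : H.Walk a b) (ha : a ∈ X) :
    b ∈ X := by
  induction p with
  | nil => exact ha
  | cons h _ ih => exact ih (hX _ ha _ h)

section Components

variable (G : SimpleGraph V) {U : Set V}

lemma mem_compSupp {C : (G.induce U).ConnectedComponent} {v : V} :
    v ∈ compSupp G U C ↔ ∃ h : v ∈ U, (G.induce U).connectedComponentMk ⟨v, h⟩ = C := by
  simp [compSupp, ConnectedComponent.mem_supp_iff]

lemma compSupp_subset (C : (G.induce U).ConnectedComponent) : compSupp G U C ⊆ U := by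
  rintro _ ⟨a, _, rfl⟩
  exact a.2

lemma mem_compSupp_mk {v : V} (hv : v ∈ U) :
    v ∈ compSupp G U ((G.induce U).connectedComponentMk ⟨v, hv⟩) :=
  (mem_compSupp G).mpr ⟨hv, rfl⟩

lemma compSupp_nonempty (C : (G.induce U).ConnectedComponent) :
    (compSupp G U C).Nonempty := by
  obtain ⟨a, rfl⟩ := C.exists_rep
  exact ⟨a, mem_compSupp_mk G a.2⟩

lemma compSupp_injective : Function.Injective (compSupp G U) :=
  fun _ _ h => ConnectedComponent.supp_injective (Subtype.val_injective.image_injective h)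

lemma disjoint_compSupp {C C' : (G.induce U).ConnectedComponent} (h : C ≠ C') :
    Disjoint (compSupp G U C) (compSupp G U C') := by
  refine Set.disjoint_left.mpr fun v hv hv' => h ?_
  obtain ⟨_, rfl⟩ := (mem_compSupp G).mp hv
  obtain ⟨_, rfl⟩ := (mem_compSupp G).mp hv'
  rfl

lemma mem_compSupp_of_adj {C : (G.induce U).ConnectedComponent} {v w : V}
    (hv : v ∈ compSupp G U C) (hw : w ∈ U) (hvw : G.Adj v w) : w ∈ compSupp G U C := by
  obtain ⟨hvU, rfl⟩ := (mem_compSupp G).mp hv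
  refine (mem_compSupp G).mpr ⟨hw, ConnectedComponent.eq.mpr ?_⟩
  exact Adj.reachable (G := G.induce U) (u := ⟨w, hw⟩) (v := ⟨v, hvU⟩) hvw.symm

lemma compSupp_mk_subset {X : Set V} (hX : ∀ a ∈ X, ∀ b ∈ U, G.Adj a b → b ∈ X)
    {v : V} (hv : v ∈ U) (hvX : v ∈ X) :
    compSupp G U ((G.induce U).connectedComponentMk ⟨v, hv⟩) ⊆ X := by
  intro w hw
  obtain ⟨hwU, hvw⟩ := (mem_compSupp G).mp hw
  obtain ⟨p⟩ := ConnectedComponent.eq.mp hvw.symm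
  exact p.mem_of_adj_closed (X := Subtype.val ⁻¹' X) (fun a ha b hab => hX a ha b b.2 hab) hvX

end Components

lemma ncard_le_numComp_of_closed [Finite V] (G : SimpleGraph V) {S X : Set V} (Z : V → Set V)
    (hXS : X ⊆ Sᶜ)
    (hZ : ∀ x ∈ X, x ∈ Z x) (hZX : ∀ x ∈ X, ∀ y ∈ X, y ∈ Z x → y = x)
    (hZS : ∀ x ∈ X, ∀ a ∈ Z x, ∀ b ∈ Sᶜ, G.Adj a b → b ∈ Z x) :
    X.ncard ≤ numComp G S := by
  let f : X → (G.induce Sᶜ).ConnectedComponent :=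
    fun x => (G.induce Sᶜ).connectedComponentMk ⟨x, hXS x.2⟩
  have hf : Function.Injective f := fun x y hxy => by
    have hy : y.1 ∈ compSupp G Sᶜ (f x) := hxy ▸ mem_compSupp_mk G (hXS y.2)
    exact Subtype.ext (hZX x x.2 y y.2
      (compSupp_mk_subset G (hZS x x.2) (hXS x.2) (hZ x x.2) hy)).symm
  simpa [numComp] using Nat.card_le_card_of_injective f hf

def AdjComp (G : SimpleGraph V) (U : Set V) (x : V) (C : (G.induce U).ConnectedComponent) :
    Prop :=
  ∃ v ∈ compSupp G U C, G.Adj x v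

lemma eB_singleton_compSupp_eq_zero [Finite V] {G : SimpleGraph V} {U : Set V} {x : V}
    {C : (G.induce U).ConnectedComponent} (hC : ¬ AdjComp G U x C) :
    eB G {x} (compSupp G U C) = 0 :=
  eB_eq_zero G fun _ hx v hv hxv => hC ⟨v, hv, Set.mem_singleton_iff.mp hx ▸ hxv⟩

section Insert

open scoped Classical Finset

variable (G : SimpleGraph V) {U : Set V} {x : V}

abbrev liftComp (U : Set V) (x : V) :
    (G.induce U).ConnectedComponent → (G.induce (insert x U)).ConnectedComponent :=
  ConnectedComponent.map (G.induceHomOfLE (Set.subset_insert x U)).toHom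

abbrev insertComp (U : Set V) (x : V) : (G.induce (insert x U)).ConnectedComponent :=
  (G.induce (insert x U)).connectedComponentMk ⟨x, Set.mem_insert x U⟩

lemma compSupp_subset_compSupp_liftComp (C : (G.induce U).ConnectedComponent) :
    compSupp G U C ⊆ compSupp G (insert x U) (liftComp G U x C) := by
  intro v hv
  obtain ⟨hvU, rfl⟩ := (mem_compSupp G).mp hv
  exact mem_compSupp_mk G (Set.mem_insert_of_mem x hvU)

lemma compSupp_liftComp_of_not_adjComp {C : (G.induce U).ConnectedComponent}
    (hC : ¬ AdjComp G U x C) : compSupp G (insert x U) (liftComp G U x C) = compSupp G U C := by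
  refine (Set.Subset.antisymm ?_ (compSupp_subset_compSupp_liftComp G C))
  obtain ⟨v, hv⟩ := compSupp_nonempty G C
  obtain ⟨hvU, rfl⟩ := (mem_compSupp G).mp hv
  refine compSupp_mk_subset G (fun a ha b hb hab => ?_) _ hv
  rcases hb with rfl | hbU
  · exact absurd ⟨a, ha, hab.symm⟩ hC
  · exact mem_compSupp_of_adj G ha hbU hab

lemma liftComp_of_adjComp {C : (G.induce U).ConnectedComponent} (hC : AdjComp G U x C) :
    liftComp G U x C = insertComp G U x := by
  obtain ⟨v, hv, hxv⟩ := hC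
  obtain ⟨hvU, rfl⟩ := (mem_compSupp G).mp hv
  exact ConnectedComponent.eq.mpr (Adj.reachable (G := G.induce (insert x U)) hxv.symm)

lemma exists_liftComp_eq {C' : (G.induce (insert x U)).ConnectedComponent}
    (hC' : C' ≠ insertComp G U x) : ∃ C, ¬ AdjComp G U x C ∧ liftComp G U x C = C' := by
  obtain ⟨v, hv⟩ := compSupp_nonempty G C'
  obtain ⟨hvU', rfl⟩ := (mem_compSupp G).mp hv
  have hvU : v ∈ U := hvU'.resolve_left fun hvx => hC' (by subst hvx; rfl)
  refine ⟨(G.induce U).connectedComponentMk ⟨v, hvU⟩, fun hadj => hC' ?_, rfl⟩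
  exact liftComp_of_adjComp G hadj

-- An explicit decidability instance, rather than the classical one, lets these lemmas be
-- instantiated at a concrete set such as `(A ∪ B)ᶜ` with the instance found for that set.
variable [Fintype V] [DecidablePred (· ∈ U)]

lemma compSupp_insertComp :
    compSupp G (insert x U) (insertComp G U x) =
      insert x (⋃ C ∈ ({C | AdjComp G U x C} : Finset _), compSupp G U C) := by
  refine Set.Subset.antisymm (compSupp_mk_subset G (fun a ha b hb hab => ?_) _
    (Set.mem_insert x _)) fun v hv => ?_
  · rcases hb with rfl | hbU
    · exact Set.mem_insert _ _
    simp only [Finset.mem_filter, Finset.mem_univ, true_and, Set.mem_insert_iff,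
      Set.mem_iUnion, exists_prop] at ha ⊢
    refine Or.inr ?_
    rcases ha with rfl | ⟨C, hC, haC⟩
    · exact ⟨_, ⟨b, mem_compSupp_mk G hbU, hab⟩, mem_compSupp_mk G hbU⟩
    · exact ⟨C, hC, mem_compSupp_of_adj G haC hbU hab⟩
  · simp only [Finset.mem_filter, Finset.mem_univ, true_and, Set.mem_insert_iff,
      Set.mem_iUnion, exists_prop] at hv
    rcases hv with rfl | ⟨C, hC, hvC⟩
    · exact mem_compSupp_mk G _
    · exact liftComp_of_adjComp G hC ▸ compSupp_subset_compSupp_liftComp G C hvC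

lemma eB_compSupp_insertComp (hx : x ∉ U) (Y : Set V) :
    eB G (compSupp G (insert x U) (insertComp G U x)) Y =
      eB G {x} Y + ∑ C with AdjComp G U x C, eB G (compSupp G U C) Y := by
  rw [compSupp_insertComp G, Set.insert_eq, eB_union_left, eB_biUnion_left]
  · exact fun C _ C' _ h => disjoint_compSupp G h
  · refine Set.disjoint_singleton_left.mpr fun hx' => hx ?_
    simp only [Set.mem_iUnion] at hx'
    obtain ⟨C, _, hxC⟩ := hx'
    exact compSupp_subset G C hxC

lemma card_filter_compSupp_insert (hx : x ∉ U) (p : Set V → Prop) [DecidablePred p] :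
    #{C' : (G.induce (insert x U)).ConnectedComponent | p (compSupp G _ C')} =
      (if p (compSupp G _ (insertComp G U x)) then 1 else 0) +
        #{C | ¬ AdjComp G U x C ∧ p (compSupp G U C)} := by
  rw [← Finset.card_filter_add_card_filter_not (fun C' => C' = insertComp G U x),
    Finset.filter_filter, Finset.filter_filter]
  congr 1
  · split_ifs with h
    · rw [Finset.card_eq_one]
      exact ⟨insertComp G U x, by ext; simp only [Finset.mem_filter]; grind⟩
    · rw [Finset.card_eq_zero, Finset.filter_eq_empty_iff]
      grind
  · symm
    refine Finset.card_nbij (liftComp G U x) (fun C hC => ?_) (fun C hC C' hC' h => ?_)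
      (fun C' hC' => ?_) <;>
      simp only [Finset.coe_filter, Finset.mem_univ, true_and, Set.mem_ofPred_eq] at *
    · rw [compSupp_liftComp_of_not_adjComp G hC.1]
      refine ⟨hC.2, fun h => hx ?_⟩
      have hxC : x ∈ compSupp G _ (insertComp G U x) := mem_compSupp_mk G (Set.mem_insert x U)
      rw [← h, compSupp_liftComp_of_not_adjComp G hC.1] at hxC
      exact compSupp_subset G C hxC
    · apply compSupp_injective G
      rw [← compSupp_liftComp_of_not_adjComp G hC.1, ← compSupp_liftComp_of_not_adjComp G hC'.1,
        h]
    · obtain ⟨C, hC, rfl⟩ := exists_liftComp_eq G hC'.2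
      exact ⟨C, ⟨hC, compSupp_liftComp_of_not_adjComp G hC ▸ hC'.1⟩, rfl⟩

end Insert

section Counting

open scoped Classical Finset

variable [Fintype V] (G : SimpleGraph V)

lemma eB_eq_sum_singleton_right (X Y : Set V) : eB G X Y = ∑ y ∈ Y.toFinset, eB G X {y} := by
  conv_lhs => rw [← Set.biUnion_of_singleton Y]
  rw [← eB_biUnion_right G _ (fun y _ y' _ h => Set.disjoint_singleton.mpr h)]
  simp only [Set.mem_toFinset]

lemma eB_eq_sum_compSupp (U : Set V) [DecidablePred (· ∈ U)] (Y : Set V) :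
    eB G U Y = ∑ C : (G.induce U).ConnectedComponent, eB G (compSupp G U C) Y := by
  have hU : U = ⋃ C ∈ (Finset.univ : Finset (G.induce U).ConnectedComponent),
      compSupp G U C := by
    ext v
    simp only [Finset.mem_univ, Set.iUnion_true, Set.mem_iUnion]
    exact ⟨fun hv => ⟨_, mem_compSupp_mk G hv⟩, fun ⟨C, hv⟩ => compSupp_subset G C hv⟩
  conv_lhs => rw [hU]
  exact eB_biUnion_left G _ (fun C _ C' _ h => disjoint_compSupp G h) Y

lemma eB_singleton_eq_sum_adjComp (U : Set V) [DecidablePred (· ∈ U)] (x : V) :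
    eB G {x} U = ∑ C with AdjComp G U x C, eB G {x} (compSupp G U C) := by
  rw [eB_comm, eB_eq_sum_compSupp, Finset.sum_filter]
  refine Finset.sum_congr rfl fun C _ => ?_
  rw [eB_comm]
  split_ifs with hC
  · rfl
  · exact eB_singleton_compSupp_eq_zero hC

lemma card_adjComp_le_sum (U : Set V) [DecidablePred (· ∈ U)] (x : V) :
    #{C | AdjComp G U x C} ≤ ∑ C with AdjComp G U x C, eB G {x} (compSupp G U C) := by
  rw [Finset.card_eq_sum_ones]
  refine Finset.sum_le_sum fun C hC => ?_
  obtain ⟨v, hv, hxv⟩ := (Finset.mem_filter.mp hC).2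
  exact one_le_eB G rfl hv hxv

lemma odd_sum_adjComp_iff (U : Set V) [DecidablePred (· ∈ U)] (Y : Set V) (x : V) :
    Odd (∑ C with AdjComp G U x C, eB G (compSupp G U C) Y) ↔
      Odd #{C | AdjComp G U x C ∧ Odd (eB G (compSupp G U C) Y)} := by
  rw [Finset.odd_sum_iff_odd_card_odd, Finset.filter_filter]

lemma card_odd_eq_card_adjComp_add (U : Set V) [DecidablePred (· ∈ U)] (Y : Set V) (x : V) :
    #{C : (G.induce U).ConnectedComponent | Odd (eB G (compSupp G U C) Y)} =
      #{C | AdjComp G U x C ∧ Odd (eB G (compSupp G U C) Y)} +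
        #{C | ¬ AdjComp G U x C ∧ Odd (eB G (compSupp G U C) Y)} := by
  rw [← Finset.card_filter_add_card_filter_not (AdjComp G U x), Finset.filter_filter,
    Finset.filter_filter]
  simp only [and_comm]

lemma odd_eB_compSupp_insertComp_sdiff_iff {U Y : Set V} [DecidablePred (· ∈ U)] {x : V}
    (hx : x ∉ U) (hxY : x ∈ Y) :
    Odd (eB G (compSupp G _ (insertComp G U x)) (Y \ {x})) ↔
      Odd (eB G {x} Y + eB G {x} U + #{C | AdjComp G U x C ∧ Odd (eB G (compSupp G U C) Y)}) := by
  have hsum : ∑ C with AdjComp G U x C, eB G (compSupp G U C) Y =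
      ∑ C with AdjComp G U x C, eB G (compSupp G U C) (Y \ {x}) +
        ∑ C with AdjComp G U x C, eB G {x} (compSupp G U C) := by
    rw [← Finset.sum_add_distrib]
    exact Finset.sum_congr rfl fun C _ => by
      rw [eB_eq_eB_sdiff_singleton_add G hxY, eB_comm G _ {x}]
  have hodd := odd_sum_adjComp_iff G U Y x
  rw [hsum] at hodd
  rw [eB_compSupp_insertComp G hx, eB_singleton_eq_sum_adjComp G U x,
    eB_eq_eB_sdiff_singleton_add G hxY (X := {x}), eB_singleton_self, add_zero]
  simp only [Nat.odd_iff] at hodd ⊢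
  omega

lemma card_odd_insertComp_sdiff {U Y : Set V} [DecidablePred (· ∈ U)] {x : V}
    (hx : x ∉ U) (hxY : x ∈ Y) :
    #{C' : (G.induce (insert x U)).ConnectedComponent |
        Odd (eB G (compSupp G _ C') (Y \ {x}))} =
      (if Odd (eB G (compSupp G _ (insertComp G U x)) (Y \ {x})) then 1 else 0) +
        #{C | ¬ AdjComp G U x C ∧ Odd (eB G (compSupp G U C) Y)} := by
  rw [card_filter_compSupp_insert G hx (fun s => Odd (eB G s (Y \ {x})))]
  refine congrArg _ (congrArg _ (Finset.filter_congr fun C _ => and_congr_right fun hC => ?_))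
  rw [eB_eq_eB_sdiff_singleton_add G hxY, eB_comm G _ {x}, eB_singleton_compSupp_eq_zero hC,
    add_zero]

lemma deltaAB_eq (A B : Set V) :
    deltaAB G A B = 2 * A.ncard - 2 * B.ncard + eB G B Aᶜ -
      #{C : (G.induce (A ∪ B)ᶜ).ConnectedComponent | Odd (eB G (compSupp G _ C) B)} := by
  rw [deltaAB, Nat.card_eq_fintype_card, Fintype.card_subtype]

end Counting

namespace IsBiasedBarrier

open scoped Classical Finset

variable [Fintype V] {G : SimpleGraph V} {A B : Set V}

lemma neg_two_lt_deltaAB_sdiff_singleton (hAB : IsBiasedBarrier G A B) {u : V} (hu : u ∈ B) :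
    -2 < deltaAB G A (B \ {u}) := by
  by_contra! h
  have := (hAB.2 A (B \ {u}) ⟨hAB.1.1.mono_right Set.sdiff_subset, h⟩).2 rfl
  have := Set.ncard_sdiff_singleton_lt_of_mem hu
  omega

lemma neg_two_lt_deltaAB_insert (hAB : IsBiasedBarrier G A B) {w : V} (hw : w ∉ A ∪ B) :
    -2 < deltaAB G (insert w A) B := by
  by_contra! h
  have hbar : IsBarrier G (insert w A) B :=
    ⟨Set.disjoint_insert_left.mpr ⟨fun h => hw (Or.inr h), hAB.1.1⟩, h⟩
  have := (hAB.2 _ B hbar).1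
  rw [Set.ncard_insert_of_notMem fun h => hw (Or.inl h)] at this
  omega

-- Compare `δ(A, B) ≤ -2` with `δ(A + w, B) ≥ -1`.
lemma eB_singleton_le_one (hAB : IsBiasedBarrier G A B)
    {C : (G.induce (A ∪ B)ᶜ).ConnectedComponent} (hodd : Odd (eB G (compSupp G _ C) B))
    {w : V} (hw : w ∈ compSupp G _ C) : eB G {w} B ≤ 1 := by
  have hwAB : w ∉ A ∪ B := compSupp_subset G C hw
  have hδ := hAB.1.2
  have hδw := hAB.neg_two_lt_deltaAB_insert hwAB
  unfold deltaAB at hδ hδw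
  have hAc : Aᶜ = (insert w A)ᶜ ∪ {w} := by
    ext v; by_cases v = w <;> simp_all
  rw [hAc, eB_union_right G (Set.disjoint_singleton_right.mpr (by simp)),
    eB_comm G B {w}] at hδ
  rw [Set.ncard_insert_of_notMem fun h => hwAB (Or.inl h)] at hδw
  have hwU0 : w ∉ (insert w A ∪ B)ᶜ := by simp
  have hU : (A ∪ B)ᶜ = insert w (insert w A ∪ B)ᶜ := by
    ext v; by_cases v = w <;> simp_all
  -- `C` lives in a type indexed by `(A ∪ B)ᶜ`, so rewrite that set only after abstracting it.
  generalize (insert w A ∪ B)ᶜ = U0 at hU hδw hwU0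
  generalize (A ∪ B)ᶜ = U at C hodd hw hδ hU
  subst hU
  obtain rfl : C = insertComp G U0 w := ((mem_compSupp G).mp hw).2.symm
  simp only [Nat.card_eq_fintype_card, Fintype.card_subtype] at hδ hδw
  rw [card_filter_compSupp_insert G hwU0 (fun s => Odd (eB G s B)), if_pos hodd] at hδ
  rw [card_odd_eq_card_adjComp_add G U0 B w] at hδw
  rw [eB_compSupp_insertComp G hwU0, Nat.odd_add, ← Nat.not_odd_iff_even,
    odd_sum_adjComp_iff, Nat.odd_iff, Nat.odd_iff] at hodd
  omega

-- Compare `δ(A, B) ≤ -2` with `δ(A, B - u) ≥ -1`.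
lemma eB_singleton_add_sum_adjComp_le (hAB : IsBiasedBarrier G A B) {u : V} (hu : u ∈ B) :
    eB G {u} B + ∑ C with AdjComp G (A ∪ B)ᶜ u C, eB G {u} (compSupp G _ C) ≤
      #{C | AdjComp G (A ∪ B)ᶜ u C ∧ Odd (eB G (compSupp G _ C) B)} := by
  have huA : u ∉ A := Set.disjoint_right.mp hAB.1.1 hu
  have huU : u ∉ (A ∪ B)ᶜ := by simp [hu]
  have hU' : (A ∪ B \ {u})ᶜ = insert u (A ∪ B)ᶜ := by
    ext v; by_cases v = u <;> simp_all
  have hAc : Aᶜ = B ∪ (A ∪ B)ᶜ := by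
    ext v; by_cases hv : v ∈ B <;> simp [hv, Set.disjoint_right.mp hAB.1.1]
  have hD : eB G {u} Aᶜ = eB G {u} B + eB G {u} (A ∪ B)ᶜ := by
    rw [hAc, eB_union_right G (Set.disjoint_compl_right_iff_subset.mpr Set.subset_union_right)]
  have hBAc : eB G B Aᶜ = eB G (B \ {u}) Aᶜ + eB G {u} Aᶜ := by
    conv_lhs => rw [← Set.sdiff_union_of_subset (Set.singleton_subset_iff.mpr hu)]
    exact eB_union_left G Set.disjoint_sdiff_left
  have hδ := hAB.1.2
  have hδu := hAB.neg_two_lt_deltaAB_sdiff_singleton hu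
  unfold deltaAB at hδ hδu
  rw [hU'] at hδu
  simp only [Nat.card_eq_fintype_card, Fintype.card_subtype] at hδ hδu
  rw [card_odd_insertComp_sdiff G huU hu] at hδu
  rw [card_odd_eq_card_adjComp_add G _ B u, hBAc, hD] at hδ
  have := Set.ncard_sdiff_singleton_add_one hu
  rw [← eB_singleton_eq_sum_adjComp]
  split_ifs at hδu with h <;>
    rw [odd_eB_compSupp_insertComp_sdiff_iff G huU hu, Nat.odd_iff] at h <;> omega

lemma not_adj (hAB : IsBiasedBarrier G A B) {u v : V} (hu : u ∈ B) (hv : v ∈ B) :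
    ¬ G.Adj u v := fun huv => by
  have := hAB.eB_singleton_add_sum_adjComp_le hu
  have := one_le_eB G (Set.mem_singleton u) hv huv
  have := card_adjComp_le_sum G (A ∪ B)ᶜ u
  have : #{C | AdjComp G (A ∪ B)ᶜ u C ∧ Odd (eB G (compSupp G _ C) B)} ≤
      #{C | AdjComp G (A ∪ B)ᶜ u C} :=
    Finset.card_le_card fun C hC => by
      simp only [Finset.mem_filter] at hC ⊢
      exact ⟨hC.1, hC.2.1⟩
  omega

lemma eB_singleton_compSupp_eq_one_and_odd (hAB : IsBiasedBarrier G A B) {u : V} (hu : u ∈ B)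
    {C : (G.induce (A ∪ B)ᶜ).ConnectedComponent} (hC : AdjComp G _ u C) :
    eB G {u} (compSupp G _ C) = 1 ∧ Odd (eB G (compSupp G _ C) B) := by
  have hle : ∀ C ∈ ({C | AdjComp G (A ∪ B)ᶜ u C} : Finset _),
      (if Odd (eB G (compSupp G _ C) B) then 1 else 0) ≤ eB G {u} (compSupp G _ C) := by
    intro C hC
    obtain ⟨v, hv, huv⟩ := (Finset.mem_filter.mp hC).2
    split_ifs
    exacts [one_le_eB G (Set.mem_singleton u) hv huv, Nat.zero_le _]
  have hsum := hAB.eB_singleton_add_sum_adjComp_le hu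
  have hcount : ∑ C with AdjComp G (A ∪ B)ᶜ u C,
      (if Odd (eB G (compSupp G _ C) B) then 1 else 0) =
        #{C | AdjComp G (A ∪ B)ᶜ u C ∧ Odd (eB G (compSupp G _ C) B)} := by
    rw [Finset.sum_boole, Finset.filter_filter, Nat.cast_id]
  have := Finset.sum_le_sum hle
  have heq := (Finset.sum_eq_sum_iff_of_le hle).mp (by omega) C (by simpa using hC)
  obtain ⟨v, hv, huv⟩ := hC
  have := one_le_eB G (Set.mem_singleton u) hv huv
  split_ifs at heq with hodd
  exacts [⟨heq.symm, hodd⟩, by omega]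

end IsBiasedBarrier

lemma Tough.two_mul_le_ncard_neighborSet [Finite V] {G : SimpleGraph V} {t : ℝ} (ht : Tough t G)
    {v : V}
    (hv : (G.neighborSet v).ncard + 2 ≤ Nat.card V) :
    2 * t ≤ (G.neighborSet v).ncard := by
  classical
  obtain ⟨w, hw⟩ : ∃ w, w ∉ insert v (G.neighborSet v) := by
    by_contra! h
    have := Set.ncard_le_ncard (fun w _ => h w) (s := Set.univ) (Set.toFinite _)
    rw [Set.ncard_univ] at this
    have := Set.ncard_insert_le v (G.neighborSet v)
    omega
  obtain ⟨hwv, hwN⟩ := not_or.mp hw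
  have h2 : 2 ≤ numComp G (G.neighborSet v) := by
    refine le_of_eq_of_le (Set.ncard_pair hwv).symm
      (ncard_le_numComp_of_closed G
        (fun x => if x = v then {v} else (insert v (G.neighborSet v))ᶜ) ?_ ?_ ?_ ?_)
    · rintro x (rfl | rfl)
      exacts [hwN, G.notMem_neighborSet_self]
    · rintro x (rfl | rfl) <;> simp [hwv, hwN]
    · rintro x (rfl | rfl) y (rfl | rfl) <;> simp [hwv]
    · rintro x (rfl | rfl) a ha b hb hab <;>
        simp only [if_neg hwv, if_pos, Set.mem_compl_iff, Set.mem_insert_iff,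
          Set.mem_singleton_iff, mem_neighborSet, not_or] at ha hb ⊢
      · exact ⟨by rintro rfl; exact ha.2 hab.symm, hb⟩
      · exact absurd (ha ▸ hab) hb
  have := ht _ h2
  rcases le_or_gt t 0 with h | h
  · linarith [(G.neighborSet v).ncard.cast_nonneg (α := ℝ)]
  · have : (2 : ℝ) ≤ numComp G (G.neighborSet v) := by exact_mod_cast h2
    nlinarith

lemma Tough.three_mul_numComp_le {G : SimpleGraph V} (ht : Tough (3 / 2) G) {S : Set V}
    (hS : 2 ≤ numComp G S) : 3 * numComp G S ≤ 2 * S.ncard := by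
  have := ht S hS
  exact_mod_cast (by linarith : (3 : ℝ) * numComp G S ≤ 2 * S.ncard)

section BigOddComps

open scoped Classical Finset

variable [Fintype V] {G : SimpleGraph V} {A B : Set V}

noncomputable def bigOddComps (G : SimpleGraph V) (A B : Set V) :
    Finset (G.induce (A ∪ B)ᶜ).ConnectedComponent :=
  {C | Odd (eB G (compSupp G _ C) B) ∧ 3 ≤ eB G (compSupp G _ C) B}

lemma three_mul_card_bigOddComps_le (G : SimpleGraph V) (A B : Set V) :
    3 * #(bigOddComps G A B) ≤ ∑ C ∈ bigOddComps G A B, eB G (compSupp G _ C) B := by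
  rw [mul_comm, ← smul_eq_mul]
  exact Finset.card_nsmul_le_sum _ _ _ fun C hC => (Finset.mem_filter.mp hC).2.2

lemma IsBarrier.two_mul_ncard_add_sum_le (h : IsBarrier G A B) :
    2 * A.ncard + ∑ C ∈ bigOddComps G A B, eB G (compSupp G _ C) B + 2 ≤
      2 * B.ncard + #(bigOddComps G A B) := by
  have hδ := h.2
  rw [deltaAB_eq] at hδ
  have hout : ∑ C : (G.induce (A ∪ B)ᶜ).ConnectedComponent, eB G (compSupp G _ C) B ≤
      eB G B Aᶜ := by
    rw [← eB_eq_sum_compSupp, eB_comm]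
    exact eB_mono_right G (Set.compl_subset_compl.mpr Set.subset_union_left)
  have hcard : #{C : (G.induce (A ∪ B)ᶜ).ConnectedComponent | Odd (eB G (compSupp G _ C) B)} =
      #(bigOddComps G A B) +
        #{C : (G.induce (A ∪ B)ᶜ).ConnectedComponent |
          Odd (eB G (compSupp G _ C) B) ∧ ¬ 3 ≤ eB G (compSupp G _ C) B} := by
    rw [bigOddComps, ← Finset.card_filter_add_card_filter_not
      (fun C : (G.induce (A ∪ B)ᶜ).ConnectedComponent => 3 ≤ eB G (compSupp G _ C) B),
      Finset.filter_filter, Finset.filter_filter]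
  have hsmall : #{C : (G.induce (A ∪ B)ᶜ).ConnectedComponent |
        Odd (eB G (compSupp G _ C) B) ∧ ¬ 3 ≤ eB G (compSupp G _ C) B} ≤
      ∑ C with Odd (eB G (compSupp G _ C) B) ∧ ¬ 3 ≤ eB G (compSupp G _ C) B,
        eB G (compSupp G (A ∪ B)ᶜ C) B := by
    rw [Finset.card_eq_sum_ones]
    exact Finset.sum_le_sum fun C hC => (Finset.mem_filter.mp hC).2.1.pos
  have hsum : ∑ C ∈ bigOddComps G A B, eB G (compSupp G _ C) B +
      ∑ C with Odd (eB G (compSupp G _ C) B) ∧ ¬ 3 ≤ eB G (compSupp G _ C) B,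
        eB G (compSupp G (A ∪ B)ᶜ C) B ≤
      ∑ C : (G.induce (A ∪ B)ᶜ).ConnectedComponent, eB G (compSupp G _ C) B := by
    rw [bigOddComps, ← Finset.filter_filter, ← Finset.filter_filter,
      Finset.sum_filter_add_sum_filter_not]
    exact Finset.sum_le_sum_of_subset (Finset.filter_subset _ _)
  omega

lemma IsBarrier.eB_add_two_le (h : IsBarrier G A B) :
    2 * A.ncard + eB G B Aᶜ + 2 ≤ 2 * B.ncard + numComp G (A ∪ B) := by
  have hδ := h.2
  rw [deltaAB_eq] at hδ
  have : #{C : (G.induce (A ∪ B)ᶜ).ConnectedComponent | Odd (eB G (compSupp G _ C) B)} ≤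
      numComp G (A ∪ B) := by
    rw [numComp, Nat.card_eq_fintype_card, ← Finset.card_univ]
    exact Finset.card_filter_le _ _
  omega

lemma Tough.not_isBarrier_empty_singleton (ht : Tough (3 / 2) G) (hn : 3 ≤ Nat.card V)
    (u : V) : ¬ IsBarrier G ∅ {u} := fun h => by
  have hdeg := h.eB_add_two_le
  simp only [Set.ncard_empty, Set.compl_empty, Set.empty_union, Set.ncard_singleton,
    eB_singleton_left, Set.inter_univ] at hdeg
  by_cases hc : 2 ≤ numComp G {u}
  · have := ht.three_mul_numComp_le hc
    rw [Set.ncard_singleton] at this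
    omega
  · have h3 := ht.two_mul_le_ncard_neighborSet (v := u) (by omega)
    have h1 : ((G.neighborSet u).ncard : ℝ) ≤ 1 := by exact_mod_cast (by omega : _ ≤ 1)
    linarith

lemma IsBiasedBarrier.sum_bigOddComps_le (hAB : IsBiasedBarrier G A B)
    (hfew : ∀ u ∈ B, {C : (G.induce (A ∪ B)ᶜ).ConnectedComponent |
      Odd (eB G (compSupp G _ C) B) ∧ 3 ≤ eB G (compSupp G _ C) B ∧
        ∃ v ∈ compSupp G _ C, G.Adj u v}.ncard < 2) :
    ∑ C ∈ bigOddComps G A B, eB G (compSupp G _ C) B ≤ B.ncard := by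
  have hB : ∀ u ∈ B, ∑ C ∈ bigOddComps G A B, eB G {u} (compSupp G _ C) ≤ 1 := fun u hu =>
    calc ∑ C ∈ bigOddComps G A B, eB G {u} (compSupp G _ C)
        ≤ ∑ C ∈ bigOddComps G A B, if AdjComp G _ u C then 1 else 0 := by
          refine Finset.sum_le_sum fun C _ => ?_
          split_ifs with hC
          · exact (hAB.eB_singleton_compSupp_eq_one_and_odd hu hC).1.le
          · exact (eB_singleton_compSupp_eq_zero hC).le
      _ ≤ 1 := by
          have hset : (({C ∈ bigOddComps G A B | AdjComp G _ u C} : Finset _) : Set _) =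
              {C : (G.induce (A ∪ B)ᶜ).ConnectedComponent | Odd (eB G (compSupp G _ C) B) ∧
                3 ≤ eB G (compSupp G _ C) B ∧ ∃ v ∈ compSupp G _ C, G.Adj u v} := by
            ext C
            rw [Finset.mem_coe, Finset.mem_filter, bigOddComps, Finset.mem_filter]
            simp [AdjComp, and_assoc]
          have := hfew u hu
          rw [Finset.sum_boole, Nat.cast_id, ← Set.ncard_coe_finset, hset]
          omega
  calc ∑ C ∈ bigOddComps G A B, eB G (compSupp G _ C) B
      = ∑ u ∈ B.toFinset, ∑ C ∈ bigOddComps G A B, eB G {u} (compSupp G _ C) := by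
        simp only [eB_eq_sum_singleton_right G _ B, eB_comm G _ {_}]
        exact Finset.sum_comm
    _ ≤ ∑ u ∈ B.toFinset, 1 := Finset.sum_le_sum fun u hu => hB u (Set.mem_toFinset.mp hu)
    _ = B.ncard := by rw [Finset.sum_const, smul_eq_mul, mul_one, Set.ncard_eq_toFinset_card']

noncomputable def bigOddAttachment (G : SimpleGraph V) (A B : Set V)
    (p : (G.induce (A ∪ B)ᶜ).ConnectedComponent → V) : Set V :=
  ⋃ C ∈ bigOddComps G A B, attachment G (compSupp G _ C) B \ {p C}

lemma bigOddAttachment_subset (p : (G.induce (A ∪ B)ᶜ).ConnectedComponent → V) :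
    bigOddAttachment G A B p ⊆ (A ∪ B)ᶜ :=
  Set.iUnion₂_subset fun C _ _ ha => compSupp_subset G C ha.1.1

lemma eq_of_notMem_bigOddAttachment {p : (G.induce (A ∪ B)ᶜ).ConnectedComponent → V}
    {C : (G.induce (A ∪ B)ᶜ).ConnectedComponent} (hC : C ∈ bigOddComps G A B) {a b : V}
    (ha : a ∈ compSupp G _ C) (haT : a ∉ bigOddAttachment G A B p) (hb : b ∈ B)
    (hab : G.Adj a b) : a = p C := by
  by_contra hne
  exact haT (Set.mem_biUnion hC ⟨⟨ha, b, hb, hab⟩, hne⟩)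

lemma IsBiasedBarrier.eq_of_adj_of_notMem_bigOddAttachment (hAB : IsBiasedBarrier G A B)
    {p : (G.induce (A ∪ B)ᶜ).ConnectedComponent → V}
    {C : (G.induce (A ∪ B)ᶜ).ConnectedComponent}
    {u v a b : V} (hu : u ∈ B) (hv : v ∈ compSupp G _ C) (hvT : v ∉ bigOddAttachment G A B p)
    (huv : G.Adj u v) (ha : a ∈ compSupp G _ C) (haT : a ∉ bigOddAttachment G A B p)
    (hb : b ∈ B) (hab : G.Adj a b) : b = u := by
  have hodd := (hAB.eB_singleton_compSupp_eq_one_and_odd hu ⟨v, hv, huv⟩).2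
  by_cases h3 : 3 ≤ eB G (compSupp G _ C) B
  · have hC : C ∈ bigOddComps G A B := by simp [bigOddComps, hodd, h3]
    obtain rfl : a = v := (eq_of_notMem_bigOddAttachment hC ha haT hb hab).trans
      (eq_of_notMem_bigOddAttachment hC hv hvT hu huv.symm).symm
    exact (eq_of_eB_le_one G (hAB.eB_singleton_le_one hodd ha) (Set.mem_singleton a) hb hab
      (Set.mem_singleton a) hu huv.symm).2
  · have h1 : eB G (compSupp G _ C) B ≤ 1 := by
      obtain ⟨k, hk⟩ := hodd
      omega
    exact (eq_of_eB_le_one G h1 ha hb hab hv hu huv.symm).2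

lemma IsBiasedBarrier.ncard_le_numComp (hAB : IsBiasedBarrier G A B)
    (p : (G.induce (A ∪ B)ᶜ).ConnectedComponent → V) :
    B.ncard ≤ numComp G (A ∪ bigOddAttachment G A B p) := by
  set T := bigOddAttachment G A B p
  -- In `G - (A ∪ T)` the component of `u` stays within `u` and the parts outside `T` of the
  -- components of `G[(A ∪ B)ᶜ]` that it sees.
  refine ncard_le_numComp_of_closed G
    (fun u => insert u {a | ∃ C : (G.induce (A ∪ B)ᶜ).ConnectedComponent,
      (∃ v ∈ compSupp G _ C \ T, G.Adj u v) ∧ a ∈ compSupp G _ C \ T})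
    (fun u hu => ?_) (fun u _ => Set.mem_insert u _) (fun u _ y hyB hy => ?_)
    (fun u hu a ha b hb hab => ?_)
  · rintro (huA | huT)
    exacts [Set.disjoint_left.mp hAB.1.1 huA hu, bigOddAttachment_subset p huT (Or.inr hu)]
  · rcases hy with rfl | ⟨C, -, hyC, -⟩
    exacts [rfl, absurd (Or.inr hyB) (compSupp_subset G C hyC)]
  obtain ⟨hbA, hbT⟩ := not_or.mp hb
  by_cases hbB : b ∈ B
  · rcases ha with rfl | ⟨C, ⟨v, hv, huv⟩, haC⟩
    · exact absurd hab (hAB.not_adj hu hbB)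
    · exact Or.inl (hAB.eq_of_adj_of_notMem_bigOddAttachment hu hv.1 hv.2 huv haC.1 haC.2 hbB hab)
  have hbU : b ∈ (A ∪ B)ᶜ := by simp [hbA, hbB]
  rcases ha with rfl | ⟨C, hC, haC⟩
  · exact Or.inr
      ⟨_, ⟨b, ⟨mem_compSupp_mk G hbU, hbT⟩, hab⟩, mem_compSupp_mk G hbU, hbT⟩
  · exact Or.inr ⟨C, hC, mem_compSupp_of_adj G haC.1 hbU hab, hbT⟩

lemma IsBiasedBarrier.exists_cut (hAB : IsBiasedBarrier G A B) :
    ∃ S : Set V, S.ncard + #(bigOddComps G A B) ≤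
      A.ncard + ∑ C ∈ bigOddComps G A B, eB G (compSupp G _ C) B ∧
        B.ncard ≤ numComp G S := by
  have : ∀ C, ∃ p, C ∈ bigOddComps G A B → p ∈ attachment G (compSupp G _ C) B := by
    intro C
    by_cases hC : C ∈ bigOddComps G A B
    · have h3 := (Finset.mem_filter.mp hC).2.2
      by_contra! h
      have := eB_eq_zero G fun x hx y hy hxy => (h x).2 ⟨hx, y, hy, hxy⟩
      omega
    · exact ⟨(compSupp_nonempty G C).some, fun h => absurd h hC⟩
  choose p hp using this
  refine ⟨_, ?_, hAB.ncard_le_numComp p⟩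
  have : (bigOddAttachment G A B p).ncard + #(bigOddComps G A B) ≤
      ∑ C ∈ bigOddComps G A B, eB G (compSupp G _ C) B :=
    ncard_biUnion_attachment_add_card_le G _ _ B p hp
  have := Set.ncard_union_le A (bigOddAttachment G A B p)
  omega

end BigOddComps

theorem stmt16_general {V : Type*} [Fintype V] (G : SimpleGraph V) (A B : Set V)
    (htough : Tough (3 / 2) G) (hn : 3 ≤ Nat.card V)
    (hAB : IsBiasedBarrier G A B) :
    ∃ u ∈ B, 2 ≤ Set.ncard {C : (G.induce (A ∪ B)ᶜ).ConnectedComponent |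
      Odd (eB G (compSupp G (A ∪ B)ᶜ C) B) ∧ 3 ≤ eB G (compSupp G (A ∪ B)ᶜ C) B ∧
      ∃ v ∈ compSupp G (A ∪ B)ᶜ C, G.Adj u v} := by
  by_contra! hfew
  have hbarrier := hAB.1.two_mul_ncard_add_sum_le
  have hsum := hAB.sum_bigOddComps_le hfew
  rcases le_or_gt 2 B.ncard with hB | hB
  · obtain ⟨S, hS, hSB⟩ := hAB.exists_cut
    have := htough.three_mul_numComp_le (hB.trans hSB)
    omega
  · have := three_mul_card_bigOddComps_le G A B
    obtain ⟨u, rfl⟩ := Set.ncard_eq_one.mp (by omega : B.ncard = 1)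
    obtain rfl := (Set.ncard_eq_zero (Set.toFinite A)).mp (by omega)
    exact htough.not_isBarrier_empty_singleton hn u hAB.1

theorem stmt16 {V : Type*} [Fintype V] (G : SimpleGraph V) (A B : Set V)
    (htough : Tough (3 / 2) G) (hn : 3 ≤ Nat.card V)
    (hG : ¬ HasTwoFactor G) (hAB : IsBiasedBarrier G A B) :
    ∃ u ∈ B, 2 ≤ Set.ncard {C : (G.induce (A ∪ B)ᶜ).ConnectedComponent |
      Odd (eB G (compSupp G (A ∪ B)ᶜ C) B) ∧ 3 ≤ eB G (compSupp G (A ∪ B)ᶜ C) B ∧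
      ∃ v ∈ compSupp G (A ∪ B)ᶜ C, G.Adj u v} :=
  stmt16_general G A B htough hn hAB
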